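/- arXiv:1609.07575 — 2 statements merged into one kernel-verified Lean document; each statement's English description precedes it below -/
import Mathlib

section
/- Let s ≤ k ≤ n be positive integers. (i) If x_1^{a_1} ⋯ x_n^{a_n} x_{n+1}^{a_{n+1}} ⋯ x_{n+k−s}^{a_{n+k−s}} ∈ M_{n+k−s,k}, then x_1^{a_1} ⋯ x_n^{a_n} ∈ M_{n,k,s}. (ii) If x_1^{a_1} ⋯ x_n^{a_n} ∈ M_{n,k,s} and 0 ≤ a_{n+1} < a_{n+2} < … < a_{n+k−s} ≤ k−1, then x_1^{a_1} ⋯ x_n^{a_n} x_{n+1}^{a_{n+1}} ⋯ x_{n+k−s}^{a_{n+k−s}} ∈ M_{n+k−s,k}. -/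
/-- The exponent of `x_i` in the skip monomial `x(S)`. -/
def skipExp {N : ℕ} (S : Finset (Fin N)) (i : Fin N) : ℕ :=
  if i ∈ S then (i : ℕ) + 1 - (S.filter (fun j => j < i)).card else 0

/-- The skip monomial `x(S)` divides the monomial with exponent vector `a`. -/
def skipDvd {N : ℕ} (S : Finset (Fin N)) (a : Fin N → ℕ) : Prop :=
  ∀ i : Fin N, skipExp S i ≤ a i

/-- A monomial with exponent vector `a` is in `M_{N,k,s}`: no `x_i^k` divides it and
no skip monomial `x(S)` with `|S| = N − s + 1` divides it.  Taking `s = k` recovers the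
`(N,k)`-nonskip monomials `M_{N,k}`. -/
def IsNonskipKS (N k s : ℕ) (a : Fin N → ℕ) : Prop :=
  (∀ i : Fin N, ¬ (k ≤ a i)) ∧
  ∀ S : Finset (Fin N), S.card = N - s + 1 → ¬ skipDvd S a

lemma skipExp_map {n N : ℕ} (h : n ≤ N) (S : Finset (Fin n)) (i : Fin n) :
    skipExp (S.map (Fin.castLEEmb h)) (Fin.castLE h i) = skipExp S i := by
  unfold skipExp
  have hmem : Fin.castLE h i ∈ S.map (Fin.castLEEmb h) ↔ i ∈ S := by
    simp
  have hfilt : ((S.map (Fin.castLEEmb h)).filter (fun j => j < Fin.castLE h i)) =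
      (S.filter (fun j => j < i)).map (Fin.castLEEmb h) := by
    rw [Finset.filter_map]
    congr 1
  rw [hfilt, Finset.card_map]
  by_cases hi : i ∈ S <;> simp [hi, hmem]

lemma notmem_map_of_ge {n N : ℕ} (h : n ≤ N) (S : Finset (Fin n)) (j : Fin N)
    (hj : n ≤ (j : ℕ)) : j ∉ S.map (Fin.castLEEmb h) := by
  intro hmem
  obtain ⟨i, _, rfl⟩ := Finset.mem_map.mp hmem
  simp only [Fin.coe_castLEEmb, Fin.coe_castLE] at hj
  exact absurd i.isLt (by omega)

lemma strictMono_gap {m : ℕ} (c : Fin m → ℕ) (hc : StrictMono c) :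
    ∀ d (i j : Fin m), (j : ℕ) = (i : ℕ) + d → c i + d ≤ c j := by
  intro d
  induction d with
  | zero => intro i j hij; have : i = j := Fin.ext (by omega); simp [this]
  | succ d ih =>
    intro i j hij
    have hlt : (i : ℕ) + d < m := by omega
    have h1 := ih i ⟨(i : ℕ) + d, hlt⟩ rfl
    have h2 : c ⟨(i : ℕ) + d, hlt⟩ < c j := hc (by simp [Fin.lt_def]; omega)
    omega

theorem stmt14 (n k s : ℕ) (hs : 1 ≤ s) (hsk : s ≤ k) (hkn : k ≤ n) :
    (∀ a : Fin (n + (k - s)) → ℕ, IsNonskipKS (n + (k - s)) k k a →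
      IsNonskipKS n k s (fun i : Fin n => a (Fin.castLE (Nat.le_add_right n (k - s)) i))) ∧
    (∀ (b : Fin n → ℕ) (c : Fin (k - s) → ℕ), IsNonskipKS n k s b →
      StrictMono c → (∀ t : Fin (k - s), c t ≤ k - 1) →
      IsNonskipKS (n + (k - s)) k k (Fin.append b c)) := by
  set h := Nat.le_add_right n (k - s)
  constructor
  · rintro a ⟨ha1, ha2⟩
    refine ⟨fun i => ha1 _, ?_⟩
    rintro S hScard hSdvd
    refine ha2 (S.map (Fin.castLEEmb h)) ?_ ?_
    · rw [Finset.card_map, hScard]; omega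
    · intro j
      by_cases hj : (j : ℕ) < n
      · have : j = Fin.castLE h ⟨(j : ℕ), hj⟩ := Fin.ext rfl
        rw [this, skipExp_map]
        exact hSdvd ⟨(j : ℕ), hj⟩
      · rw [skipExp, if_neg (notmem_map_of_ge h S j (by omega))]
        exact Nat.zero_le _
  · rintro b c ⟨hb1, hb2⟩ hc hck
    constructor
    · intro i hki
      rcases Nat.lt_or_ge (i : ℕ) n with hi | hi
      · have happ := Fin.append_left b c ⟨(i : ℕ), hi⟩
        rw [show Fin.castAdd (k - s) ⟨(i : ℕ), hi⟩ = i from Fin.ext rfl] at happ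
        rw [happ] at hki
        exact hb1 _ hki
      · have hlt : (i : ℕ) - n < k - s := by omega
        have happ := Fin.append_right b c ⟨(i : ℕ) - n, hlt⟩
        rw [show Fin.natAdd n ⟨(i : ℕ) - n, hlt⟩ = i from Fin.ext (by simp; omega)] at happ
        rw [happ] at hki
        have := hck ⟨(i : ℕ) - n, hlt⟩
        omega
    · intro S hScard hSdvd
      have hcard' : S.card = n - s + 1 := by rw [hScard]; omega
      have hSne : S.Nonempty := Finset.card_pos.mp (by omega)
      set M := S.max' hSne with hM
      have hMmem : M ∈ S := S.max'_mem hSne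
      rcases Nat.lt_or_ge (M : ℕ) n with hMn | hMn
      · -- all of S lies in first n coords
        have hsub : ∀ j ∈ S, (j : ℕ) < n := by
          intro j hj
          exact lt_of_le_of_lt (Fin.le_def.mp (S.le_max' j hj)) hMn
        set S₀ : Finset (Fin n) := Finset.univ.filter (fun i => Fin.castLE h i ∈ S) with hS₀
        have hmap : S₀.map (Fin.castLEEmb h) = S := by
          ext j
          constructor
          · intro hjm
            obtain ⟨i, hi, rfl⟩ := Finset.mem_map.mp hjm
            exact (Finset.mem_filter.mp hi).2
          · intro hj
            refine Finset.mem_map.mpr ⟨⟨(j : ℕ), hsub j hj⟩,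
              Finset.mem_filter.mpr ⟨Finset.mem_univ _, ?_⟩, Fin.ext rfl⟩
            have he : Fin.castLE h ⟨(j : ℕ), hsub j hj⟩ = j := Fin.ext rfl
            rw [he]; exact hj
        refine hb2 S₀ ?_ ?_
        · have := Finset.card_map (f := Fin.castLEEmb h) (s := S₀)
          rw [hmap] at this
          omega
        · intro i
          have := hSdvd (Fin.castLE h i)
          rw [← hmap, skipExp_map] at this
          have happ : Fin.append b c (Fin.castLE h i) = b i := by
            have : Fin.castLE h i = Fin.castAdd (k - s) i := Fin.ext rfl
            rw [this, Fin.append_left]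
          rwa [happ] at this
      · -- max in tail: contradiction
        have hlt : (M : ℕ) - n < k - s := by have := M.isLt; omega
        set t : Fin (k - s) := ⟨(M : ℕ) - n, hlt⟩ with ht
        have happ : Fin.append b c M = c t := by
          have h1 := Fin.append_right b c t
          rw [show Fin.natAdd n t = M from Fin.ext (by simp [ht]; omega)] at h1
          exact h1
        -- filter card
        have hfe : S.filter (fun j => j < M) = S.erase M := by
          ext j
          simp only [Finset.mem_filter, Finset.mem_erase]
          constructor
          · rintro ⟨hj, hlt'⟩; exact ⟨ne_of_lt hlt', hj⟩
          · rintro ⟨hne, hj⟩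
            exact ⟨hj, lt_of_le_of_ne (S.le_max' j hj) hne⟩
        have hcardf : (S.filter (fun j => j < M)).card = n - s := by
          rw [hfe, Finset.card_erase_of_mem hMmem, hcard']
          omega
        have hexp : skipExp S M = (M : ℕ) + 1 - (n - s) := by
          rw [skipExp, if_pos hMmem, hcardf]
        have hdvd := hSdvd M
        rw [hexp, happ] at hdvd
        -- c t ≤ s + t
        have hbound : c t + (k - s - 1 - (t : ℕ)) ≤ c ⟨k - s - 1, by omega⟩ :=
          strictMono_gap c hc _ t _ (by simp [ht]; omega)
        have := hck ⟨k - s - 1, by omega⟩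
        have ht' : (t : ℕ) = (M : ℕ) - n := rfl
        omega
end

section
/- Let s ≤ k ≤ n be positive integers. Then |M_{n,k,s}| = |OP_{n,k,s}|; equivalently, the number of monomials in M_{n,k,s} equals the number of functions f : {1, …, n} → {1, …, k} whose image contains {1, …, s}. -/
namespace Stmt15Aux

/-- small-chain condition with offset `m`. -/
def HS (r m : ℕ) {N : ℕ} (a : Fin N → ℕ) : Prop :=
  ∃ T : Finset (Fin N), r ≤ T.card ∧ ∀ i ∈ T, a i ≤ m + (T.filter (fun j => j < i)).card

/-- greedy count -/
def gg (A : ℕ → ℕ) : ℕ → ℕ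
  | 0 => 0
  | i+1 => if i + 1 ≤ A i + gg A i then gg A i + 1 else gg A i

lemma gg_succ' (A : ℕ → ℕ) (i : ℕ) :
    gg A (i+1) = if i + 1 ≤ A i + gg A i then gg A i + 1 else gg A i := rfl

lemma gg_le (A : ℕ → ℕ) : ∀ i, gg A i ≤ i := by
  intro i; induction i with
  | zero => simp [gg]
  | succ i ih => rw [gg_succ']; split <;> omega

lemma gg_mono (A : ℕ → ℕ) (i : ℕ) : gg A i ≤ gg A (i+1) := by
  rw [gg_succ']; split <;> omega

lemma gg_step (A : ℕ → ℕ) (i : ℕ) : gg A (i+1) ≤ gg A i + 1 := by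
  rw [gg_succ']; split <;> omega

-- intermediate value
lemma gg_ivt (A : ℕ → ℕ) (t v : ℕ) (hv : v ≤ gg A t) : ∃ c ≤ t, gg A c = v := by
  induction t with
  | zero => exact ⟨0, le_refl 0, by simp [gg] at hv ⊢; omega⟩
  | succ t ih =>
    by_cases h : v ≤ gg A t
    · obtain ⟨c, hc, hc2⟩ := ih h
      exact ⟨c, by omega, hc2⟩
    · have := gg_step A t
      exact ⟨t+1, le_refl _, by omega⟩

variable {N : ℕ}

/-- the greedy selected set -/
def gset (a : Fin N → ℕ) : Finset (Fin N) :=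
  Finset.univ.filter (fun i : Fin N =>
    (i : ℕ) + 1 ≤ a i + gg (fun j => if h : j < N then a ⟨j, h⟩ else 0) (i : ℕ))

lemma gset_count (a : Fin N → ℕ) :
    ∀ i ≤ N, ((gset a).filter (fun j : Fin N => (j : ℕ) < i)).card
      = gg (fun j => if h : j < N then a ⟨j, h⟩ else 0) i := by
  set A := fun j => if h : j < N then a ⟨j, h⟩ else 0 with hA
  intro i
  induction i with
  | zero => intro _; simp [gg]
  | succ i ih =>
    intro hi
    have hiN : i < N := hi
    have hsplit : ((gset a).filter (fun j : Fin N => (j : ℕ) < i + 1))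
        = ((gset a).filter (fun j : Fin N => (j : ℕ) < i)) ∪ ((gset a).filter (fun j : Fin N => (j : ℕ) = i)) := by
      ext x
      simp only [Finset.mem_union, Finset.mem_filter]
      constructor
      · rintro ⟨hx, h2⟩
        rcases Nat.lt_succ_iff_lt_or_eq.mp h2 with h | h
        · exact Or.inl ⟨hx, h⟩
        · exact Or.inr ⟨hx, h⟩
      · rintro (⟨hx, h2⟩ | ⟨hx, h2⟩) <;> exact ⟨hx, by omega⟩
    have hdisj : Disjoint ((gset a).filter (fun j : Fin N => (j : ℕ) < i))
        ((gset a).filter (fun j : Fin N => (j : ℕ) = i)) := by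
      rw [Finset.disjoint_left]
      intro x hx hy
      simp only [Finset.mem_filter] at hx hy
      omega
    have heq : ((gset a).filter (fun j : Fin N => (j : ℕ) = i)).card
        = if i + 1 ≤ A i + gg A i then 1 else 0 := by
      have hAi : A i = a ⟨i, hiN⟩ := by simp [hA, hiN]
      by_cases hc : i + 1 ≤ A i + gg A i
      · rw [if_pos hc]
        have : ((gset a).filter (fun j : Fin N => (j : ℕ) = i)) = {⟨i, hiN⟩} := by
          ext x
          simp only [Finset.mem_filter, Finset.mem_singleton, gset, Finset.mem_filter,
            Finset.mem_univ, true_and]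
          constructor
          · rintro ⟨_, h2⟩; exact Fin.ext h2
          · rintro rfl
            refine ⟨?_, rfl⟩
            simpa [hAi] using hc
        rw [this]; simp
      · rw [if_neg hc]
        rw [Finset.card_eq_zero]
        ext x
        simp only [Finset.mem_filter, gset, Finset.mem_univ, true_and, Finset.notMem_empty,
          iff_false, not_and]
        intro h1 h2
        apply hc
        have : x = ⟨i, hiN⟩ := Fin.ext h2
        subst this
        simpa [hAi] using h1
    rw [hsplit, Finset.card_union_of_disjoint hdisj, ih (by omega), heq]
    show _ = gg A (i+1)
    rw [gg_succ']
    split <;> omega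

lemma gset_skipDvd (a : Fin N → ℕ) : skipDvd (gset a) a := by
  intro i
  unfold skipExp
  split
  · next hmem =>
    have hfe : ((gset a).filter (fun j => j < i)) = ((gset a).filter (fun j : Fin N => (j : ℕ) < (i : ℕ))) := by
      apply Finset.filter_congr; intro x _; exact Iff.rfl
    rw [hfe, gset_count a i (le_of_lt i.2)]
    simp only [gset, Finset.mem_filter, Finset.mem_univ, true_and] at hmem
    omega
  · omega

lemma gset_card (a : Fin N → ℕ) :
    (gset a).card = gg (fun j => if h : j < N then a ⟨j, h⟩ else 0) N := by
  rw [← gset_count a N (le_refl N)]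
  congr 1
  rw [Finset.filter_true_of_mem]
  intro x _; exact x.2

lemma card_lt_filter (i : ℕ) (hi : i ≤ N) :
    (Finset.univ.filter (fun j : Fin N => (j : ℕ) < i)).card = i := by
  induction i with
  | zero => simp
  | succ i ih =>
    have hiN : i < N := hi
    have : (Finset.univ.filter (fun j : Fin N => (j : ℕ) < i + 1))
        = insert ⟨i, hiN⟩ (Finset.univ.filter (fun j : Fin N => (j : ℕ) < i)) := by
      ext x
      simp only [Finset.mem_filter, Finset.mem_univ, true_and, Finset.mem_insert, Fin.ext_iff]
      omega
    rw [this, Finset.card_insert_of_notMem (by simp), ih (by omega)]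

lemma gset_compl_small (a : Fin N → ℕ) (i : Fin N) (hi : i ∉ gset a) :
    a i ≤ (((gset a)ᶜ).filter (fun j => j < i)).card := by
  simp only [gset, Finset.mem_filter, Finset.mem_univ, true_and, not_le] at hi
  have hcount := gset_count a (i : ℕ) (le_of_lt i.2)
  have htot := card_lt_filter (N := N) (i : ℕ) (le_of_lt i.2)
  have hsplit : (Finset.univ.filter (fun j : Fin N => (j : ℕ) < (i:ℕ))).card
      = ((gset a).filter (fun j : Fin N => (j:ℕ) < (i:ℕ))).card
        + (((gset a)ᶜ).filter (fun j : Fin N => (j:ℕ) < (i:ℕ))).card := by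
    rw [← Finset.card_union_of_disjoint]
    · congr 1
      ext x
      simp only [Finset.mem_filter, Finset.mem_union, Finset.mem_univ, true_and, Finset.mem_compl]
      tauto
    · rw [Finset.disjoint_left]
      intro x hx hy
      simp only [Finset.mem_filter, Finset.mem_compl] at hx hy
      exact hy.1 hx.1
  have hfe : (((gset a)ᶜ).filter (fun j => j < i)) = (((gset a)ᶜ).filter (fun j : Fin N => (j : ℕ) < (i:ℕ))) := by
    apply Finset.filter_congr; intro x _; exact Iff.rfl
  rw [hfe]
  have hggle := gg_le (fun j => if h : j < N then a ⟨j, h⟩ else 0) (i : ℕ)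
  omega



lemma part1 {n : ℕ} (k s : ℕ) (hs1 : 1 ≤ s) (hsn : s ≤ n) (a : Fin n → ℕ) :
    IsNonskipKS n k s a ↔ (∀ i, a i < k) ∧ HS s 0 a := by
  constructor
  · rintro ⟨h1, h2⟩
    refine ⟨fun i => not_le.mp (h1 i), ?_⟩
    -- greedy
    have hcard : (gset a).card ≤ n - s := by
      by_contra hbig
      push_neg at hbig
      have hbig' : n - s + 1 ≤ gg (fun j => if h : j < n then a ⟨j, h⟩ else 0) n := by
        rw [← gset_card]; omega
      obtain ⟨c, hc, hcv⟩ := gg_ivt _ n (n - s + 1) hbig'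
      set S' := (gset a).filter (fun j : Fin n => (j : ℕ) < c) with hS'
      have hS'card : S'.card = n - s + 1 := by
        rw [hS', gset_count a c hc, hcv]
      refine h2 S' hS'card ?_
      intro i
      unfold skipExp
      split
      · next hmem =>
        rw [hS'] at hmem
        simp only [Finset.mem_filter] at hmem
        have hfe : (S'.filter (fun j => j < i)) = ((gset a).filter (fun j => j < i)) := by
          rw [hS', Finset.filter_filter]
          apply Finset.filter_congr
          intro x _
          constructor
          · rintro ⟨_, h⟩; exact h
          · intro h; exact ⟨by have := Fin.lt_def.mp h; omega, h⟩
        rw [hfe]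
        have := gset_skipDvd a i
        unfold skipExp at this
        rw [if_pos hmem.1] at this
        exact this
      · omega
    have hTcard : s ≤ ((gset a)ᶜ).card := by
      have := Finset.card_compl (gset a)
      have h2 := Finset.card_le_univ (gset a)
      simp only [Fintype.card_fin] at this
      omega
    exact ⟨(gset a)ᶜ, hTcard, fun i hi => by
      have := gset_compl_small a i (by simpa using hi)
      omega⟩
  · rintro ⟨hb, T, hTc, hT⟩
    refine ⟨fun i => not_le.mpr (hb i), ?_⟩
    intro S hScard hdvd
    have hdisj : S ∩ T = ∅ := by
      by_contra hne
      have hne' : (S ∩ T).Nonempty := Finset.nonempty_iff_ne_empty.mpr hne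
      set i := (S ∩ T).min' hne' with hi
      have hiMem : i ∈ S ∩ T := Finset.min'_mem _ _
      have hiS : i ∈ S := (Finset.mem_inter.mp hiMem).1
      have hiT : i ∈ T := (Finset.mem_inter.mp hiMem).2
      have hSi : (i : ℕ) + 1 - (S.filter (fun j => j < i)).card ≤ a i := by
        have := hdvd i
        unfold skipExp at this
        rwa [if_pos hiS] at this
      have hTi : a i ≤ (T.filter (fun j => j < i)).card := by
        have := hT i hiT; omega
      have hXsub : (S.filter (fun j => j < i)) ⊆ Finset.univ.filter (fun j : Fin n => (j : ℕ) < (i : ℕ)) := by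
        intro x hx
        simp only [Finset.mem_filter, Finset.mem_univ, true_and] at hx ⊢
        exact hx.2
      have hYsub : (T.filter (fun j => j < i)) ⊆ Finset.univ.filter (fun j : Fin n => (j : ℕ) < (i : ℕ)) := by
        intro x hx
        simp only [Finset.mem_filter, Finset.mem_univ, true_and] at hx ⊢
        exact hx.2
      have hcap : 1 ≤ ((S.filter (fun j => j < i)) ∩ (T.filter (fun j => j < i))).card := by
        have htot := card_lt_filter (N := n) (i : ℕ) (le_of_lt i.2)
        have hunion : ((S.filter (fun j => j < i)) ∪ (T.filter (fun j => j < i))).card ≤ (i : ℕ) := by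
          rw [← htot]
          exact Finset.card_le_card (Finset.union_subset hXsub hYsub)
        have := Finset.card_union_add_card_inter (S.filter (fun j => j < i)) (T.filter (fun j => j < i))
        have hXcard : (S.filter (fun j => j < i)).card ≤ (i : ℕ) := by
          rw [← htot]; exact Finset.card_le_card hXsub
        omega
      obtain ⟨j, hj⟩ := Finset.card_pos.mp (by omega : 0 < ((S.filter (fun j => j < i)) ∩ (T.filter (fun j => j < i))).card)
      simp only [Finset.mem_inter, Finset.mem_filter] at hj
      have hjI : j ∈ S ∩ T := Finset.mem_inter.mpr ⟨hj.1.1, hj.2.1⟩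
      have := Finset.min'_le _ j hjI
      rw [← hi] at this
      exact absurd hj.1.2 (not_lt.mpr this)
    have : S.card + T.card ≤ n := by
      have hsub : S ∪ T ⊆ Finset.univ := Finset.subset_univ _
      have hle := Finset.card_le_card hsub
      simp only [Finset.card_univ, Fintype.card_fin] at hle
      have := Finset.card_union_add_card_inter S T
      rw [hdisj] at this
      simp at this
      omega
    omega
variable {n : ℕ}

def dropT (T : Finset (Fin (n+1))) : Finset (Fin n) :=
  Finset.univ.filter (fun j : Fin n => j.succ ∈ T)

lemma dropT_map (T : Finset (Fin (n+1))) : (dropT T).map (Fin.succEmb n) = T.erase 0 := by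
  ext x
  simp only [Finset.mem_map, dropT, Finset.mem_filter, Finset.mem_univ, true_and,
    Finset.mem_erase]
  constructor
  · rintro ⟨y, hy, rfl⟩
    exact ⟨Fin.succ_ne_zero y, hy⟩
  · rintro ⟨hx0, hxT⟩
    exact ⟨x.pred hx0, by rwa [Fin.succ_pred], Fin.succ_pred x hx0⟩

lemma dropT_card (T : Finset (Fin (n+1))) : T.card ≤ (dropT T).card + 1 := by
  have h1 : ((dropT T).map (Fin.succEmb n)).card = (dropT T).card := Finset.card_map _
  rw [dropT_map] at h1
  have := Finset.card_erase_add_one (a := (0 : Fin (n+1))) (s := T)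
  by_cases h0 : (0 : Fin (n+1)) ∈ T
  · have := this h0; omega
  · rw [Finset.erase_eq_of_notMem h0] at h1; omega

lemma dropT_card_of_not_mem (T : Finset (Fin (n+1))) (h0 : (0 : Fin (n+1)) ∉ T) :
    T.card = (dropT T).card := by
  have h1 : ((dropT T).map (Fin.succEmb n)).card = (dropT T).card := Finset.card_map _
  rw [dropT_map, Finset.erase_eq_of_notMem h0] at h1
  omega

lemma filter_map_succ (T' : Finset (Fin n)) (j : Fin n) :
    ((T'.map (Fin.succEmb n)).filter (fun x => x < j.succ)) = (T'.filter (fun x => x < j)).map (Fin.succEmb n) := by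
  ext x
  simp only [Finset.mem_filter, Finset.mem_map]
  constructor
  · rintro ⟨⟨y, hy, rfl⟩, hlt⟩
    exact ⟨y, ⟨hy, by simpa [Fin.succ_lt_succ_iff] using hlt⟩, rfl⟩
  · rintro ⟨y, ⟨hy, hlt⟩, rfl⟩
    exact ⟨⟨y, hy, rfl⟩, by simpa [Fin.succ_lt_succ_iff] using hlt⟩

lemma filter_succ_subset (T : Finset (Fin (n+1))) (j : Fin n) :
    (T.filter (fun x => x < j.succ)) ⊆ insert 0 (((dropT T).filter (fun x => x < j)).map (Fin.succEmb n)) := by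
  intro x hx
  simp only [Finset.mem_filter] at hx
  rcases eq_or_ne x 0 with rfl | hx0
  · exact Finset.mem_insert_self _ _
  · refine Finset.mem_insert_of_mem ?_
    simp only [Finset.mem_map, Finset.mem_filter, dropT, Finset.mem_univ, true_and]
    refine ⟨x.pred hx0, ⟨by rw [Fin.succ_pred]; exact hx.1, ?_⟩, Fin.succ_pred x hx0⟩
    have := hx.2
    rw [← Fin.succ_pred x hx0] at this
    exact (Fin.succ_lt_succ_iff).mp this

lemma filter_succ_count_le (T : Finset (Fin (n+1))) (j : Fin n) :
    (T.filter (fun x => x < j.succ)).card ≤ ((dropT T).filter (fun x => x < j)).card + 1 := by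
  have h := Finset.card_le_card (filter_succ_subset T j)
  have h2 := Finset.card_insert_le (0 : Fin (n+1)) (((dropT T).filter (fun x => x < j)).map (Fin.succEmb n))
  rw [Finset.card_map] at h2
  omega

lemma filter_succ_count_of_not_mem (T : Finset (Fin (n+1))) (j : Fin n) (h0 : (0 : Fin (n+1)) ∉ T) :
    (T.filter (fun x => x < j.succ)).card ≤ ((dropT T).filter (fun x => x < j)).card := by
  have hsub : (T.filter (fun x => x < j.succ)) ⊆ (((dropT T).filter (fun x => x < j)).map (Fin.succEmb n)) := by
    intro x hx
    have := filter_succ_subset T j hx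
    rcases Finset.mem_insert.mp this with rfl | h
    · exact absurd (Finset.mem_filter.mp hx).1 h0
    · exact h
  have := Finset.card_le_card hsub
  rwa [Finset.card_map] at this

lemma HS_cons (r m : ℕ) (a : Fin (n+1) → ℕ) :
    HS (r+1) m a ↔ ((a 0 ≤ m ∧ HS r (m+1) (fun j : Fin n => a j.succ)) ∨
      (m < a 0 ∧ HS (r+1) m (fun j : Fin n => a j.succ))) := by
  constructor
  · rintro ⟨T, hTc, hT⟩
    by_cases h0 : a 0 ≤ m
    · left
      refine ⟨h0, dropT T, ?_, ?_⟩
      · have := dropT_card T; omega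
      · intro j hj
        simp only [dropT, Finset.mem_filter, Finset.mem_univ, true_and] at hj
        have h1 := hT j.succ hj
        have h2 := filter_succ_count_le T j
        show a j.succ ≤ _
        omega
    · right
      push_neg at h0
      have h0T : (0 : Fin (n+1)) ∉ T := by
        intro hmem
        have hmem0 := hT 0 hmem
        have hemp : (T.filter (fun j => j < (0 : Fin (n+1)))) = ∅ := by
          ext x; simp [Fin.not_lt_zero]
        rw [hemp] at hmem0
        simp only [Finset.card_empty] at hmem0
        omega
      refine ⟨h0, dropT T, ?_, ?_⟩
      · rw [← dropT_card_of_not_mem T h0T]; exact hTc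
      · intro j hj
        simp only [dropT, Finset.mem_filter, Finset.mem_univ, true_and] at hj
        have h1 := hT j.succ hj
        have h2 := filter_succ_count_of_not_mem T j h0T
        show a j.succ ≤ _
        omega
  · rintro (⟨h0, T', hTc, hT⟩ | ⟨h0, T', hTc, hT⟩)
    · refine ⟨insert 0 (T'.map (Fin.succEmb n)), ?_, ?_⟩
      · rw [Finset.card_insert_of_notMem (by
          intro hmem
          simp only [Finset.mem_map] at hmem
          obtain ⟨y, hy, h⟩ := hmem
          exact Fin.succ_ne_zero y h), Finset.card_map]
        omega
      · intro i hi
        rcases Finset.mem_insert.mp hi with rfl | hmem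
        · calc a 0 ≤ m := h0
            _ ≤ m + _ := Nat.le_add_right _ _
        · simp only [Finset.mem_map] at hmem
          obtain ⟨j, hj, rfl⟩ := hmem
          have key : ((insert 0 (T'.map (Fin.succEmb n))).filter (fun x => x < (Fin.succEmb n) j)).card
              = (T'.filter (fun x => x < j)).card + 1 := by
            rw [Finset.filter_insert]
            rw [if_pos (by exact Fin.succ_pos j)]
            rw [Finset.card_insert_of_notMem (by
              intro hmem
              simp only [Finset.mem_filter, Finset.mem_map] at hmem
              obtain ⟨⟨y, hy, h⟩, -⟩ := hmem
              exact Fin.succ_ne_zero y h)]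
            have : ((T'.map (Fin.succEmb n)).filter (fun x => x < (Fin.succEmb n) j)) = (T'.filter (fun x => x < j)).map (Fin.succEmb n) := filter_map_succ T' j
            rw [this, Finset.card_map]
          rw [key]
          have h2 : a j.succ ≤ m + 1 + (T'.filter (fun x => x < j)).card := hT j hj
          show a (Fin.succ j) ≤ _
          omega
    · refine ⟨T'.map (Fin.succEmb n), by rw [Finset.card_map]; exact hTc, ?_⟩
      intro i hi
      simp only [Finset.mem_map] at hi
      obtain ⟨j, hj, rfl⟩ := hi
      have key := filter_map_succ T' j
      show a (Fin.succ j) ≤ m + ((T'.map (Fin.succEmb n)).filter (fun x => x < Fin.succ j)).card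
      rw [key, Finset.card_map]
      exact hT j hj

lemma HS_zero {N m : ℕ} (a : Fin N → ℕ) : HS 0 m a :=
  ⟨∅, by simp⟩

lemma not_HS_fin0 {r m : ℕ} (hr : 1 ≤ r) (a : Fin 0 → ℕ) : ¬ HS r m a := by
  rintro ⟨T, hc, -⟩
  have := Finset.card_le_univ T
  simp only [Finset.card_univ, Fintype.card_fin] at this
  omega

variable {k : ℕ}

def Wset (w : ℕ) {n : ℕ} (f : Fin n → Fin k) : Finset (Fin k) :=
  Finset.univ.filter (fun x : Fin k => (x : ℕ) < w ∧ ∃ i, f i = x)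

lemma Wset_fin0 (w : ℕ) (f : Fin 0 → Fin k) : Wset w f = ∅ := by
  ext x
  simp only [Wset, Finset.mem_filter, Finset.mem_univ, true_and, Finset.notMem_empty, iff_false,
    not_and]
  rintro - ⟨i, -⟩
  exact i.elim0

lemma Wset_subset (w : ℕ) {n : ℕ} (f : Fin n → Fin k) :
    Wset w f ⊆ Finset.univ.filter (fun x : Fin k => (x : ℕ) < w) := by
  intro x hx
  simp only [Wset, Finset.mem_filter, Finset.mem_univ, true_and] at hx ⊢
  exact hx.1

lemma Wset_cons (w : ℕ) {n : ℕ} (x : Fin k) (g : Fin n → Fin k) :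
    Wset w (Fin.cons x g) = if (x : ℕ) < w then insert x (Wset w g) else Wset w g := by
  have hex : ∀ y : Fin k, (∃ i : Fin (n+1), (Fin.cons (α := fun _ => Fin k) x g) i = y) ↔ (x = y ∨ ∃ i : Fin n, g i = y) := by
    intro y
    rw [Fin.exists_fin_succ]
    simp [Fin.cons_zero, Fin.cons_succ]
  by_cases hxw : (x : ℕ) < w
  · rw [if_pos hxw]
    ext y
    simp only [Wset, Finset.mem_filter, Finset.mem_univ, true_and, Finset.mem_insert, hex]
    constructor
    · rintro ⟨hy, h | h⟩
      · exact Or.inl h.symm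
      · exact Or.inr ⟨hy, h⟩
    · rintro (rfl | ⟨hy, h⟩)
      · exact ⟨hxw, Or.inl rfl⟩
      · exact ⟨hy, Or.inr h⟩
  · rw [if_neg hxw]
    ext y
    simp only [Wset, Finset.mem_filter, Finset.mem_univ, true_and, hex]
    constructor
    · rintro ⟨hy, h | h⟩
      · exact absurd (h ▸ hy) hxw
      · exact ⟨hy, h⟩
    · rintro ⟨hy, h⟩
      exact ⟨hy, Or.inr h⟩

lemma Dcond_cons (r w : ℕ) {n : ℕ} (x : Fin k) (g : Fin n → Fin k) :
    (r + 1 ≤ (Wset w (Fin.cons x g)).card) ↔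
      ((r + 1 ≤ (Wset w g).card) ∨
        ((Wset w g).card = r ∧ ((x : ℕ) < w ∧ x ∉ Wset w g))) := by
  rw [Wset_cons]
  by_cases hxw : (x : ℕ) < w
  · rw [if_pos hxw]
    by_cases hx : x ∈ Wset w g
    · rw [Finset.insert_eq_self.mpr hx]
      constructor
      · exact fun h => Or.inl h
      · rintro (h | ⟨_, _, hnx⟩)
        · exact h
        · exact absurd hx hnx
    · rw [Finset.card_insert_of_notMem hx]
      constructor
      · intro h
        rcases eq_or_lt_of_le (Nat.le_of_succ_le_succ h) with heq | hlt
        · exact Or.inr ⟨heq.symm, hxw, hx⟩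
        · exact Or.inl hlt
      · rintro (h | ⟨hc, _, _⟩) <;> omega
  · rw [if_neg hxw]
    constructor
    · exact Or.inl
    · rintro (h | ⟨_, hc, _⟩)
      · exact h
      · exact absurd hc hxw

open Classical in
noncomputable def equivOrSum {B : Type*} (P Q : B → Prop) (hdisj : ∀ b, P b → Q b → False) :
    {b // P b ∨ Q b} ≃ {b // P b} ⊕ {b // Q b} where
  toFun b := if h : P b.1 then Sum.inl ⟨b.1, h⟩ else Sum.inr ⟨b.1, b.2.resolve_left h⟩
  invFun s := match s with
    | Sum.inl b => ⟨b.1, Or.inl b.2⟩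
    | Sum.inr b => ⟨b.1, Or.inr b.2⟩
  left_inv b := by
    by_cases h : P b.1 <;> simp [h]
  right_inv s := by
    rcases s with ⟨b, hb⟩ | ⟨b, hb⟩
    · simp [hb]
    · have : ¬ P b := fun hp => hdisj b hp hb
      simp [this]

def prodSubtypeSnd {A B : Type*} (P : B → Prop) : {p : A × B // P p.2} ≃ A × {b // P b} where
  toFun p := (p.1.1, ⟨p.1.2, p.2⟩)
  invFun q := ⟨(q.1, q.2.1), q.2.2⟩
  left_inv p := rfl
  right_inv q := rfl

def prodSubtypeBoth {A B : Type*} (C : A → Prop) (P : B → Prop) :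
    {p : A × B // C p.1 ∧ P p.2} ≃ {a // C a} × {b // P b} where
  toFun p := (⟨p.1.1, p.2.1⟩, ⟨p.1.2, p.2.2⟩)
  invFun q := ⟨(q.1.1, q.2.1), q.1.2, q.2.2⟩
  left_inv p := rfl
  right_inv q := rfl

def prodSubtypeSigma {A B : Type*} (Q : B → Prop) (R : A → B → Prop) :
    {p : A × B // Q p.2 ∧ R p.1 p.2} ≃ Σ b : {b // Q b}, {a // R a b.1} where
  toFun p := ⟨⟨p.1.2, p.2.1⟩, ⟨p.1.1, p.2.2⟩⟩
  invFun s := ⟨(s.2.1, s.1.1), s.1.2, s.2.2⟩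
  left_inv p := rfl
  right_inv s := rfl

lemma card_le_subtype {m : ℕ} (hm : m < k) : Nat.card {x : Fin k // (x : ℕ) ≤ m} = m + 1 := by
  have e : {x : Fin k // (x : ℕ) ≤ m} ≃ Fin (m + 1) :=
    { toFun := fun x => ⟨x.1, Nat.lt_succ_of_le x.2⟩
      invFun := fun y => ⟨⟨y.1, by omega⟩, by exact Nat.lt_succ_iff.mp y.2⟩
      left_inv := fun x => by apply Subtype.ext; apply Fin.ext; rfl
      right_inv := fun y => by apply Fin.ext; rfl }
  rw [Nat.card_congr e, Nat.card_eq_fintype_card, Fintype.card_fin]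

lemma card_gt_subtype {m : ℕ} (hm : m < k) : Nat.card {x : Fin k // m < (x : ℕ)} = k - (m + 1) := by
  have e : {x : Fin k // m < (x : ℕ)} ≃ Fin (k - (m + 1)) :=
    { toFun := fun x => ⟨x.1 - (m + 1), by have h1 := x.1.2; have h2 := x.2; omega⟩
      invFun := fun y => ⟨⟨y.1 + (m + 1), by have := y.2; omega⟩, by simp; omega⟩
      left_inv := fun x => by
        apply Subtype.ext; apply Fin.ext
        have := x.2
        show x.1.1 - (m+1) + (m+1) = x.1.1
        omega
      right_inv := fun y => by apply Fin.ext; show y.1 + (m+1) - (m+1) = y.1; omega }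
  rw [Nat.card_congr e, Nat.card_eq_fintype_card, Fintype.card_fin]

lemma fiber_card {n w r : ℕ} (hw : w ≤ k) (g : Fin n → Fin k) (hg : (Wset w g).card = r) :
    Nat.card {x : Fin k // (x : ℕ) < w ∧ x ∉ Wset w g} = w - r := by
  have e : {x : Fin k // (x : ℕ) < w ∧ x ∉ Wset w g}
      ≃ {x : Fin k // x ∈ (Finset.univ.filter (fun x : Fin k => (x : ℕ) < w)) \ Wset w g} := by
    apply Equiv.subtypeEquivRight
    intro x
    simp only [Finset.mem_sdiff, Finset.mem_filter, Finset.mem_univ, true_and]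
  rw [Nat.card_congr e, Nat.card_eq_fintype_card, Fintype.card_coe,
    Finset.card_sdiff_of_subset (Wset_subset w g), card_lt_filter w hw, hg]

lemma Dcond_cons2 (r w : ℕ) {n : ℕ} (f : Fin (n+1) → Fin k) :
    (r + 1 ≤ (Wset w f).card) ↔
      ((r + 1 ≤ (Wset w (Fin.tail f)).card) ∨
        ((Wset w (Fin.tail f)).card = r ∧ ((f 0 : ℕ) < w ∧ f 0 ∉ Wset w (Fin.tail f)))) := by
  conv_lhs => rw [← Fin.cons_self_tail f]
  exact Dcond_cons r w (f 0) (Fin.tail f)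

lemma mainCount (k : ℕ) : ∀ n r m : ℕ, r + m ≤ k →
    Nat.card {a : Fin n → Fin k // HS r m (fun i => (a i : ℕ))}
      = Nat.card {f : Fin n → Fin k // r ≤ (Wset (m + r) f).card} := by
  intro n
  induction n with
  | zero =>
    intro r m _
    obtain _ | r := r
    ·
      rw [Nat.card_congr (Equiv.subtypeUnivEquiv (fun a => HS_zero _)),
          Nat.card_congr (Equiv.subtypeUnivEquiv (fun f => Nat.zero_le _))]
    · have h1 : IsEmpty {a : Fin 0 → Fin k // HS (r+1) m (fun i => (a i : ℕ))} :=
        ⟨fun x => not_HS_fin0 (by omega) _ x.2⟩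
      have h2 : IsEmpty {f : Fin 0 → Fin k // r+1 ≤ (Wset (m+(r+1)) f).card} :=
        ⟨fun x => by have := x.2; rw [Wset_fin0] at this; simp at this⟩
      rw [Nat.card_of_isEmpty, Nat.card_of_isEmpty]
  | succ n ih =>
    intro r m hrm
    obtain _ | r := r
    · rw [Nat.card_congr (Equiv.subtypeUnivEquiv (fun a => HS_zero _)),
          Nat.card_congr (Equiv.subtypeUnivEquiv (fun f => Nat.zero_le _))]
    · have hm : m < k := by omega
      obtain ⟨w, hw⟩ : ∃ w, w = m + (r + 1) := ⟨_, rfl⟩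
      rw [← hw]
      have q1 : r + (m + 1) ≤ k := by omega
      have e1 : m + 1 + r = w := by omega
      have e2 : m + (r + 1) = w := by omega
      have hwr : w - r = m + 1 := by omega
      obtain ⟨d, hd⟩ : ∃ d, k = m + 1 + d := ⟨k - (m + 1), by omega⟩
      have h1 : k - (m + 1) = d := by omega
      -- LHS decomposition
      have eL : {a : Fin (n+1) → Fin k // HS (r+1) m (fun i => (a i : ℕ))}
          ≃ ({x : Fin k // (x : ℕ) ≤ m} × {b : Fin n → Fin k // HS r (m+1) (fun i => (b i : ℕ))})
            ⊕ ({x : Fin k // m < (x : ℕ)} × {b : Fin n → Fin k // HS (r+1) m (fun i => (b i : ℕ))}) := by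
        exact (Equiv.subtypeEquiv ((Fin.consEquiv (fun _ => Fin k)).symm)
            (fun a => HS_cons r m (fun i => (a i : ℕ)))).trans
          ((equivOrSum
            (fun p : Fin k × (Fin n → Fin k) => ((p.1 : ℕ) ≤ m ∧ HS r (m+1) (fun i => (p.2 i : ℕ))))
            (fun p => (m < (p.1 : ℕ) ∧ HS (r+1) m (fun i => (p.2 i : ℕ))))
            (fun p h1 h2 => absurd h2.1 (not_lt.mpr h1.1))).trans
          (Equiv.sumCongr
            (prodSubtypeBoth (fun x : Fin k => (x : ℕ) ≤ m)
              (fun b : Fin n → Fin k => HS r (m+1) (fun i => (b i : ℕ))))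
            (prodSubtypeBoth (fun x : Fin k => m < (x : ℕ))
              (fun b : Fin n → Fin k => HS (r+1) m (fun i => (b i : ℕ))))))
      -- RHS decomposition
      have eR : {f : Fin (n+1) → Fin k // r + 1 ≤ (Wset w f).card}
          ≃ ((Fin k × {g : Fin n → Fin k // r + 1 ≤ (Wset w g).card})
            ⊕ (Σ b : {g : Fin n → Fin k // (Wset w g).card = r},
                {x : Fin k // (x : ℕ) < w ∧ x ∉ Wset w b.1})) := by
        exact (Equiv.subtypeEquiv ((Fin.consEquiv (fun _ => Fin k)).symm)
            (fun f => Dcond_cons2 r w f)).trans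
          ((equivOrSum
            (fun p : Fin k × (Fin n → Fin k) => r + 1 ≤ (Wset w p.2).card)
            (fun p => (Wset w p.2).card = r ∧ ((p.1 : ℕ) < w ∧ p.1 ∉ Wset w p.2))
            (fun p h1 h2 => by omega)).trans
          (Equiv.sumCongr
            (prodSubtypeSnd (fun g : Fin n → Fin k => r + 1 ≤ (Wset w g).card))
            (prodSubtypeSigma (fun g : Fin n → Fin k => (Wset w g).card = r)
              (fun (x : Fin k) (g : Fin n → Fin k) => (x : ℕ) < w ∧ x ∉ Wset w g))))
      -- sigma part
      have eSig : (Σ b : {g : Fin n → Fin k // (Wset w g).card = r},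
              {x : Fin k // (x : ℕ) < w ∧ x ∉ Wset w b.1})
          ≃ {g : Fin n → Fin k // (Wset w g).card = r} × Fin (w - r) := by
        refine Equiv.trans (Equiv.sigmaCongrRight (fun b => ?_)) (Equiv.sigmaEquivProd _ _)
        exact Fintype.equivFinOfCardEq (by
          rw [← Nat.card_eq_fintype_card]
          exact fiber_card (by omega) b.1 b.2)
      -- split lemma
      have hsplit : Nat.card {g : Fin n → Fin k // r ≤ (Wset w g).card}
          = Nat.card {g : Fin n → Fin k // (Wset w g).card = r}
            + Nat.card {g : Fin n → Fin k // r + 1 ≤ (Wset w g).card} := by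
        have e : {g : Fin n → Fin k // r ≤ (Wset w g).card}
            ≃ {g : Fin n → Fin k // (Wset w g).card = r} ⊕ {g : Fin n → Fin k // r + 1 ≤ (Wset w g).card} :=
          (Equiv.subtypeEquivRight
            (fun g : Fin n → Fin k => (by omega : r ≤ (Wset w g).card ↔
              ((Wset w g).card = r ∨ r + 1 ≤ (Wset w g).card)))).trans
          (equivOrSum (fun g : Fin n → Fin k => (Wset w g).card = r)
            (fun g : Fin n → Fin k => r + 1 ≤ (Wset w g).card) (fun g h1 h2 => by omega))
        rw [Nat.card_congr e, Nat.card_sum]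
      have ih1 := ih r (m+1) q1
      rw [e1] at ih1
      have ih2 := ih (r+1) m hrm
      rw [e2] at ih2
      rw [Nat.card_congr eL, Nat.card_sum, Nat.card_prod, Nat.card_prod,
        card_le_subtype hm, card_gt_subtype hm, ih1, ih2,
        Nat.card_congr eR, Nat.card_sum, Nat.card_prod,
        Nat.card_congr eSig, Nat.card_prod]
      rw [Nat.card_eq_fintype_card (α := Fin k), Fintype.card_fin,
        Nat.card_eq_fintype_card (α := Fin (w - r)), Fintype.card_fin]
      rw [hwr, h1, hsplit, hd]
      ring

lemma final_iff {n s : ℕ} (hsk : s ≤ k) (f : Fin n → Fin k) :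
    s ≤ (Wset s f).card ↔ ∀ j : Fin k, (j : ℕ) < s → ∃ i, f i = j := by
  constructor
  · intro h j hj
    have hsub := Wset_subset s f
    have hcardw := card_lt_filter (N := k) s hsk
    have heq : Wset s f = Finset.univ.filter (fun x : Fin k => (x : ℕ) < s) :=
      Finset.eq_of_subset_of_card_le hsub (by omega)
    have hjmem : j ∈ Wset s f := by
      rw [heq]
      simp only [Finset.mem_filter, Finset.mem_univ, true_and]
      exact hj
    simp only [Wset, Finset.mem_filter] at hjmem
    exact hjmem.2.2
  · intro h
    have hsub : Finset.univ.filter (fun x : Fin k => (x : ℕ) < s) ⊆ Wset s f := by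
      intro x hx
      simp only [Finset.mem_filter, Finset.mem_univ, true_and] at hx
      simp only [Wset, Finset.mem_filter, Finset.mem_univ, true_and]
      exact ⟨hx, h x hx⟩
    calc s = _ := (card_lt_filter (N := k) s hsk).symm
      _ ≤ _ := Finset.card_le_card hsub

def valEquiv {n s : ℕ} : {a : Fin n → ℕ // (∀ i, a i < k) ∧ HS s 0 a}
    ≃ {b : Fin n → Fin k // HS s 0 (fun i => (b i : ℕ))} where
  toFun a := ⟨fun i => ⟨a.1 i, a.2.1 i⟩, a.2.2⟩
  invFun b := ⟨fun i => (b.1 i : ℕ), fun i => (b.1 i).2, b.2⟩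
  left_inv a := rfl
  right_inv b := rfl

end Stmt15Aux

/-- `|M_{n,k,s}| = |OP_{n,k,s}|`: the monomials in `M_{n,k,s}` are equinumerous with the
functions `f : {1,…,n} → {1,…,k}` whose image contains `{1,…,s}`. -/
theorem stmt15 (n k s : ℕ) (hs : 1 ≤ s) (hsk : s ≤ k) (hkn : k ≤ n) :
    Nat.card {a : Fin n → ℕ // IsNonskipKS n k s a}
      = Nat.card {f : Fin n → Fin k // ∀ j : Fin k, (j : ℕ) < s → ∃ i : Fin n, f i = j} := by
  rw [Nat.card_congr (Equiv.subtypeEquivRight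
    (fun a => Stmt15Aux.part1 k s hs (le_trans hsk hkn) a))]
  rw [Nat.card_congr (Stmt15Aux.valEquiv (k := k) (n := n) (s := s))]
  have hmc := Stmt15Aux.mainCount k n s 0 (by rw [Nat.add_zero]; exact hsk)
  rw [Nat.zero_add s] at hmc
  rw [hmc]
  exact Nat.card_congr (Equiv.subtypeEquivRight (fun f => Stmt15Aux.final_iff hsk f))
end
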